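/- arXiv:2204.01803 — 2 statements merged into one kernel-verified Lean document; each statement's English description precedes it below -/
import Mathlib

section
/- For all i, j ∈ {1,…,n}: E[I_{i,j}] = 1/6 − 1/(6n) if i = j, and E[I_{i,j}] = −1/(6n) if i ≠ j. -/
open MeasureTheory ProbabilityTheory Filter Finset Topology

noncomputable section

/-- The rank `R_i` of `X_i` among `X_1, …, X_n` (as a real number). -/
def rank1 {Ω : Type} {n : ℕ} (X : Fin n → Ω → ℝ) (i : Fin n) (ω : Ω) : ℝ :=
  ∑ j : Fin n, if X j ω ≤ X i ω then (1 : ℝ) else 0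

/-- The quantity `I_{i,j}`. -/
def I1 {Ω : Type} {n : ℕ} (X : Fin n → Ω → ℝ) (i j : Fin n) (ω : Ω) : ℝ :=
  (2 * (n : ℝ) + 1) / (6 * (n : ℝ))
    + rank1 X i ω * (rank1 X i ω - 1) / (2 * (n : ℝ) * ((n : ℝ) + 1))
    + rank1 X j ω * (rank1 X j ω - 1) / (2 * (n : ℝ) * ((n : ℝ) + 1))
    - max (rank1 X i ω) (rank1 X j ω) / ((n : ℝ) + 1)

/-- The centred quantity `Ĩ_{i,j}`. -/
def Itil1 {Ω : Type} {n : ℕ} (X : Fin n → Ω → ℝ) (i j : Fin n) (ω : Ω) : ℝ :=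
  if i = j then I1 X i j ω - (1 / 6 - 1 / (6 * (n : ℝ)))
  else I1 X i j ω + 1 / (6 * (n : ℝ))

/-- The basic model assumptions: measurability, `X_1, …, X_n` are i.i.d. real-valued
random variables, and their common cdf is continuous. -/
def IID1 {Ω : Type} [MeasurableSpace Ω] {n : ℕ} (X : Fin n → Ω → ℝ)
    (P : Measure Ω) : Prop :=
  (∀ i, Measurable (X i)) ∧
  iIndepFun X P ∧
  (∀ i j : Fin n, Measure.map (X i) P = Measure.map (X j) P) ∧
  (∀ i : Fin n, Continuous fun t : ℝ => (P {ω | X i ω ≤ t}).toReal)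

/-! Writing ranks as sums of indicators reduces every expectation to probabilities of events
`{X_l ≤ X_k for all l ∈ S}`. For i.i.d. variables with continuous cdf the law of
`(X_1, …, X_n)` is invariant under permutations of the indices and ties are null, so for
`k ∈ S` these events are equally likely and partition `Ω` up to a null set: each has
probability `1 / #S`. This gives `E[R_i] = (n+1)/2`, `E[R_i²] = (n+1)/2 + (n²-1)/3` and, since
`max(R_i, R_j) = #{k | X_k ≤ max(X_i, X_j)}`, `E[max(R_i, R_j)] = 2(n+1)/3` for `i ≠ j`. -/

lemma nullSingletonClass_of_continuous_cdf {μ : Measure ℝ} [IsProbabilityMeasure μ]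
    (h : Continuous (cdf μ)) : NullSingletonClass μ where
  measure_singleton x := by
    rw [← measure_cdf μ, StieltjesFunction.measure_singleton,
      h.continuousWithinAt.leftLim_eq, sub_self, ENNReal.ofReal_zero]

section

variable {Ω ι : Type*} [MeasurableSpace Ω] {P : Measure Ω}

lemma measurableSet_forall_le {f : ι → Ω → ℝ} (hf : ∀ i, Measurable (f i)) (S : Finset ι)
    (k : ι) : MeasurableSet {ω | ∀ l ∈ S, f l ω ≤ f k ω} := by
  simp only [Set.ofPred_forall]
  exact .biInter S.countable_toSet fun l _ => measurableSet_le (hf l) (hf k)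

lemma ProbabilityTheory.IndepFun.ae_ne [IsProbabilityMeasure P] {Y Z : Ω → ℝ}
    (hY : Measurable Y) (hZ : Measurable Z) (hYZ : IndepFun Y Z P) [NullSingletonClass (P.map Z)] :
    ∀ᵐ ω ∂P, Y ω ≠ Z ω := by
  refine ae_of_ae_map (hY.prodMk hZ).aemeasurable (p := fun p : ℝ × ℝ => p.1 ≠ p.2) ?_
  rw [hYZ.map_prod_eq_prod_map_map hY.aemeasurable hZ.aemeasurable,
    Measure.ae_prod_iff_ae_ae (p := fun z : ℝ × ℝ => z.1 ≠ z.2)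
      (measurableSet_eq_fun measurable_fst measurable_snd).compl]
  exact Eventually.of_forall fun y => by simp [ae_iff]

lemma ProbabilityTheory.iIndepFun.map_comp_perm [Fintype ι] {X : ι → Ω → ℝ}
    (hX : ∀ i, Measurable (X i)) (hind : iIndepFun X P)
    (hident : ∀ i j, P.map (X i) = P.map (X j)) (σ : Equiv.Perm ι) :
    P.map (fun ω i => X (σ i) ω) = P.map (fun ω i => X i ω) := by
  rw [(hind.precomp σ.injective).map_fun_eq_pi_map (fun i => (hX _).aemeasurable),
    hind.map_fun_eq_pi_map (fun i => (hX _).aemeasurable)]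
  exact congrArg Measure.pi (funext fun i => hident _ _)

structure IsExchangeableWithoutTies (X : ι → Ω → ℝ) (P : Measure Ω) : Prop where
  measurable : ∀ i, Measurable (X i)
  map_comp_perm : ∀ σ : Equiv.Perm ι, P.map (fun ω i => X (σ i) ω) = P.map (fun ω i => X i ω)
  ae_ne : ∀ ⦃k l⦄, k ≠ l → ∀ᵐ ω ∂P, X k ω ≠ X l ω

lemma IID1.isExchangeableWithoutTies {Ω : Type} [MeasurableSpace Ω] {P : Measure Ω}
    [IsProbabilityMeasure P] {n : ℕ} {X : Fin n → Ω → ℝ}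
    (hX : IID1 X P) : IsExchangeableWithoutTies X P where
  measurable := hX.1
  map_comp_perm := hX.2.1.map_comp_perm hX.1 hX.2.2.1
  ae_ne k l hkl := by
    have := Measure.isProbabilityMeasure_map (μ := P) (hX.1 l).aemeasurable
    have hcdf : cdf (P.map (X l)) = fun t => (P {ω | X l ω ≤ t}).toReal := by
      ext t
      rw [cdf_eq_real, measureReal_def, Measure.map_apply (hX.1 l) measurableSet_Iic]
      rfl
    have := nullSingletonClass_of_continuous_cdf (hcdf ▸ hX.2.2.2 l)
    exact (hX.2.1.indepFun hkl).ae_ne (hX.1 k) (hX.1 l)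

namespace IsExchangeableWithoutTies

variable {X : ι → Ω → ℝ}

lemma measure_forall_le_eq [DecidableEq ι] (h : IsExchangeableWithoutTies X P)
    {S : Finset ι} {k k' : ι} (hk : k ∈ S) (hk' : k' ∈ S) :
    P {ω | ∀ l ∈ S, X l ω ≤ X k ω} = P {ω | ∀ l ∈ S, X l ω ≤ X k' ω} := by
  set σ := Equiv.swap k k'
  set A := {x : ι → ℝ | ∀ l ∈ S, x l ≤ x k}
  have hA : MeasurableSet A := measurableSet_forall_le measurable_pi_apply S k
  have hσS : ∀ l, σ l ∈ S ↔ l ∈ S := by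
    intro l
    rw [Equiv.swap_apply_def]
    split_ifs <;> simp_all
  calc P {ω | ∀ l ∈ S, X l ω ≤ X k ω} = P.map (fun ω i => X i ω) A := by
        rw [Measure.map_apply (measurable_pi_lambda _ h.measurable) hA]; rfl
    _ = P.map (fun ω i => X (σ i) ω) A := by rw [h.map_comp_perm]
    _ = P {ω | ∀ l ∈ S, X (σ l) ω ≤ X k' ω} := by
        rw [Measure.map_apply (measurable_pi_lambda _ fun i => h.measurable _) hA]
        simp [A, σ]
    _ = P {ω | ∀ l ∈ S, X l ω ≤ X k' ω} := by
        congr 1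
        ext ω
        refine ⟨fun H l hl => ?_, fun H l hl => H _ ((hσS l).2 hl)⟩
        simpa [σ] using H (σ l) ((hσS l).2 hl)

lemma measureReal_forall_le [IsProbabilityMeasure P] [DecidableEq ι]
    (h : IsExchangeableWithoutTies X P) {S : Finset ι} {k : ι} (hk : k ∈ S) :
    P.real {ω | ∀ l ∈ S, X l ω ≤ X k ω} = 1 / #S := by
  set A := fun k => {ω | ∀ l ∈ S, X l ω ≤ X k ω}
  have hcover : ⋃ m ∈ S, A m = Set.univ := by
    refine Set.eq_univ_of_forall fun ω => ?_
    obtain ⟨m, hm, hmax⟩ := S.exists_max_image (X · ω) ⟨k, hk⟩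
    exact Set.mem_biUnion hm hmax
  have hdisj : Set.Pairwise S (fun a b => AEDisjoint P (A a) (A b)) := fun a ha b hb hab =>
    measure_mono_null (fun ω hω => not_not_intro (le_antisymm (hω.2 a ha) (hω.1 b hb)))
      (ae_iff.1 (h.ae_ne hab))
  have hsum := measureReal_biUnion_finset₀ hdisj fun m _ =>
    (measurableSet_forall_le h.measurable S m).nullMeasurableSet
  rw [hcover, probReal_univ, sum_congr rfl fun m hm => show P.real (A m) = P.real (A k)
    from congrArg ENNReal.toReal (h.measure_forall_le_eq hm hk), sum_const, nsmul_eq_mul] at hsum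
  have hS : (#S : ℝ) ≠ 0 := by exact_mod_cast (Finset.card_pos.2 ⟨k, hk⟩).ne'
  rw [eq_div_iff hS]
  exact (hsum.trans (mul_comm _ _)).symm

end IsExchangeableWithoutTies

end

section Counting

variable {ι : Type*} [DecidableEq ι]

lemma inv_card_pair (i j : ι) :
    (1 / #{i, j} : ℝ) = 1 / 2 + if j = i then 1 / 2 else 0 := by
  rcases eq_or_ne j i with rfl | hji
  · norm_num
  · rw [card_pair hji.symm, if_neg hji]; norm_num

lemma inv_card_triple {i j : ι} (hji : j ≠ i) (k : ι) :
    (1 / #{i, j, k} : ℝ) = 1 / 3 + (if k = i then 1 / 6 else 0) + if k = j then 1 / 6 else 0 := by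
  rcases eq_or_ne k i with hki | hki
  · rw [hki, insert_eq_of_mem (by simp), card_pair hji]; simp [hji.symm]; norm_num
  rcases eq_or_ne k j with hkj | hkj
  · rw [hkj, insert_eq_of_mem (mem_singleton_self j), card_pair hji.symm]; simp [hji]; norm_num
  · rw [card_insert_of_notMem (by simp [hji.symm, hki.symm]), card_pair hkj.symm]
    simp [hki, hkj]

lemma sum_inv_card_pair [Fintype ι] (i : ι) :
    ∑ j : ι, (1 / #{i, j} : ℝ) = ((Fintype.card ι : ℝ) + 1) / 2 := by
  simp only [inv_card_pair, sum_add_distrib, sum_const, sum_ite_eq', mem_univ, if_true, card_univ,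
    nsmul_eq_mul]
  ring

lemma sum_inv_card_triple [Fintype ι] {i j : ι} (hji : j ≠ i) :
    ∑ k : ι, (1 / #{i, j, k} : ℝ) = ((Fintype.card ι : ℝ) + 1) / 3 := by
  simp only [inv_card_triple hji, sum_add_distrib, sum_const, sum_ite_eq', mem_univ, if_true,
    card_univ, nsmul_eq_mul]
  ring

lemma sum_sum_inv_card_triple [Fintype ι] (i : ι) :
    ∑ j, ∑ k : ι, (1 / #{i, j, k} : ℝ)
      = ((Fintype.card ι : ℝ) + 1) / 2 + (Fintype.card ι - 1) * (Fintype.card ι + 1) / 3 := by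
  have hrow : ∀ j, ∑ k : ι, (1 / #{i, j, k} : ℝ)
      = ((Fintype.card ι : ℝ) + 1) / 3 + if j = i then ((Fintype.card ι : ℝ) + 1) / 6 else 0 := by
    intro j
    rcases eq_or_ne j i with rfl | hji
    · simp only [insert_eq_of_mem (mem_insert_self j _), sum_inv_card_pair, if_true]; ring
    · rw [sum_inv_card_triple hji, if_neg hji, add_zero]
  simp only [hrow, sum_add_distrib, sum_const, sum_ite_eq', mem_univ, if_true, card_univ,
    nsmul_eq_mul]
  ring

end Counting

lemma ite_one_eq_indicator {α : Type*} {p : α → Prop} [DecidablePred p] :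
    (fun a => if p a then (1 : ℝ) else 0) = {a | p a}.indicator 1 := by
  ext a; simp [Set.indicator_apply]

section Integration

variable {Ω : Type*} [MeasurableSpace Ω] {P : Measure Ω} [IsFiniteMeasure P] {κ : Type*}

lemma integrable_ite_one {p : Ω → Prop} [DecidablePred p] (hp : MeasurableSet {ω | p ω}) :
    Integrable (fun ω => if p ω then (1 : ℝ) else 0) P := by
  rw [ite_one_eq_indicator]; exact (integrable_const 1).indicator hp

lemma integrable_sum_ite_one (s : Finset κ) {p : κ → Ω → Prop} [∀ k, DecidablePred (p k)]
    (hp : ∀ k, MeasurableSet {ω | p k ω}) :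
    Integrable (fun ω => ∑ k ∈ s, (if p k ω then (1 : ℝ) else 0)) P :=
  integrable_finsetSum _ fun k _ => integrable_ite_one (hp k)

lemma integral_sum_ite_one (s : Finset κ) {p : κ → Ω → Prop} [∀ k, DecidablePred (p k)]
    (hp : ∀ k, MeasurableSet {ω | p k ω}) :
    ∫ ω, ∑ k ∈ s, (if p k ω then (1 : ℝ) else 0) ∂P = ∑ k ∈ s, P.real {ω | p k ω} := by
  rw [integral_finsetSum _ fun k _ => integrable_ite_one (hp k)]
  refine sum_congr rfl fun k _ => ?_
  rw [ite_one_eq_indicator, integral_indicator_one (hp k)]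

end Integration

namespace IsExchangeableWithoutTies

variable {Ω ι : Type*} [MeasurableSpace Ω] {P : Measure Ω} [IsProbabilityMeasure P]
  [DecidableEq ι] {X : ι → Ω → ℝ}

lemma measureReal_le (h : IsExchangeableWithoutTies X P) (i j : ι) :
    P.real {ω | X j ω ≤ X i ω} = 1 / #{i, j} := by
  rw [← h.measureReal_forall_le (mem_insert_self i _)]
  congr 1; ext ω; simp

lemma measureReal_le_and_le (h : IsExchangeableWithoutTies X P) (i j k : ι) :
    P.real {ω | X j ω ≤ X i ω ∧ X k ω ≤ X i ω} = 1 / #{i, j, k} := by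
  rw [← h.measureReal_forall_le (mem_insert_self i _)]
  congr 1; ext ω; simp

lemma measureReal_le_max (h : IsExchangeableWithoutTies X P) {i j k : ι} (hij : i ≠ j)
    (hki : k ≠ i) (hkj : k ≠ j) :
    P.real {ω | X k ω ≤ max (X i ω) (X j ω)} = 2 / 3 := by
  have hties : {ω | max (X i ω) (X j ω) < X k ω} =ᵐ[P] {ω | X i ω ≤ X k ω ∧ X j ω ≤ X k ω} := by
    filter_upwards [h.ae_ne hki, h.ae_ne hkj] with ω hωi hωj
    simp only [max_lt_iff, eq_iff_iff]
    exact ⟨fun H => ⟨H.1.le, H.2.le⟩, fun H => ⟨H.1.lt_of_ne hωi.symm, H.2.lt_of_ne hωj.symm⟩⟩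
  have hmeas : MeasurableSet {ω | max (X i ω) (X j ω) < X k ω} :=
    measurableSet_lt ((h.measurable i).max (h.measurable j)) (h.measurable k)
  have hcard : #{k, i, j} = 3 := by
    rw [card_insert_of_notMem (by simp [hki, hkj]), card_pair hij]
  rw [show {ω | X k ω ≤ max (X i ω) (X j ω)} = {ω | max (X i ω) (X j ω) < X k ω}ᶜ from
      by ext; exact not_lt (α := ℝ) |>.symm,
    measureReal_compl hmeas, measureReal_congr hties, h.measureReal_le_and_le, hcard]
  norm_num

end IsExchangeableWithoutTies

section Rank

variable {Ω : Type} {n : ℕ}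

lemma rank1_sq (X : Fin n → Ω → ℝ) (i : Fin n) (ω : Ω) :
    rank1 X i ω ^ 2 = ∑ j, ∑ k, if X j ω ≤ X i ω ∧ X k ω ≤ X i ω then (1 : ℝ) else 0 := by
  simp only [rank1, sq, sum_mul_sum, ite_zero_mul_ite_zero, mul_one]

lemma max_rank1 (X : Fin n → Ω → ℝ) (i j : Fin n) (ω : Ω) :
    max (rank1 X i ω) (rank1 X j ω)
      = ∑ k, if X k ω ≤ max (X i ω) (X j ω) then (1 : ℝ) else 0 := by
  have hmono : Monotone fun t => ∑ k, if X k ω ≤ t then (1 : ℝ) else 0 := fun s t hst =>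
    sum_le_sum fun k _ => by
      split_ifs with hs ht <;> first | exact absurd (hs.trans hst) ht | norm_num
  exact hmono.map_max.symm

variable [MeasurableSpace Ω] {P : Measure Ω} [IsProbabilityMeasure P] {X : Fin n → Ω → ℝ}

lemma integrable_rank1 (hX : ∀ i, Measurable (X i)) (i : Fin n) : Integrable (rank1 X i) P :=
  integrable_sum_ite_one _ fun j => measurableSet_le (hX j) (hX i)

lemma integrable_rank1_sq (hX : ∀ i, Measurable (X i)) (i : Fin n) :
    Integrable (fun ω => rank1 X i ω ^ 2) P := by
  simp only [rank1_sq]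
  exact integrable_finsetSum _ fun j _ => integrable_sum_ite_one _ fun k =>
    (measurableSet_le (hX j) (hX i)).inter (measurableSet_le (hX k) (hX i))

lemma integrable_max_rank1 (hX : ∀ i, Measurable (X i)) (i j : Fin n) :
    Integrable (fun ω => max (rank1 X i ω) (rank1 X j ω)) P := by
  simp only [max_rank1]
  exact integrable_sum_ite_one _ fun k => measurableSet_le (hX k) ((hX i).max (hX j))

lemma integral_I1 (hX : ∀ i, Measurable (X i)) (i j : Fin n) :
    ∫ ω, I1 X i j ω ∂P = (2 * (n : ℝ) + 1) / (6 * n)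
      + ((∫ ω, rank1 X i ω ^ 2 ∂P) - (∫ ω, rank1 X i ω ∂P)
          + ((∫ ω, rank1 X j ω ^ 2 ∂P) - ∫ ω, rank1 X j ω ∂P)) / (2 * n * (n + 1))
      - (∫ ω, max (rank1 X i ω) (rank1 X j ω) ∂P) / (n + 1) := by
  have hR := integrable_rank1 (P := P) hX
  have hR2 := integrable_rank1_sq (P := P) hX
  have hmax := integrable_max_rank1 (P := P) hX i j
  have hI : I1 X i j = fun ω => (2 * (n : ℝ) + 1) / (6 * n)
      + ((rank1 X i ω ^ 2 - rank1 X i ω) + (rank1 X j ω ^ 2 - rank1 X j ω)) / (2 * n * (n + 1))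
      - max (rank1 X i ω) (rank1 X j ω) / (n + 1) := by
    ext ω; unfold I1; ring
  rw [hI, integral_sub (by fun_prop) (by fun_prop), integral_add (by fun_prop) (by fun_prop),
    integral_const, integral_div (2 * (n : ℝ) * (n + 1)), integral_div ((n : ℝ) + 1),
    integral_add (by fun_prop) (by fun_prop), integral_sub (hR2 i) (hR i),
    integral_sub (hR2 j) (hR j), probReal_univ, one_smul]

namespace IsExchangeableWithoutTies

lemma integral_rank1 (h : IsExchangeableWithoutTies X P) (i : Fin n) :
    ∫ ω, rank1 X i ω ∂P = ((n : ℝ) + 1) / 2 := by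
  simp only [rank1]
  rw [integral_sum_ite_one _ fun j => measurableSet_le (h.measurable j) (h.measurable i)]
  simp only [h.measureReal_le, sum_inv_card_pair, Fintype.card_fin]

lemma integral_rank1_sq (h : IsExchangeableWithoutTies X P) (i : Fin n) :
    ∫ ω, rank1 X i ω ^ 2 ∂P = ((n : ℝ) + 1) / 2 + (n - 1) * (n + 1) / 3 := by
  have hmeas : ∀ j k, MeasurableSet {ω | X j ω ≤ X i ω ∧ X k ω ≤ X i ω} := fun j k =>
    (measurableSet_le (h.measurable j) (h.measurable i)).inter
      (measurableSet_le (h.measurable k) (h.measurable i))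
  simp only [rank1_sq]
  rw [integral_finsetSum _ fun j _ => integrable_sum_ite_one _ (hmeas j)]
  simp only [integral_sum_ite_one _ (hmeas _), h.measureReal_le_and_le, sum_sum_inv_card_triple,
    Fintype.card_fin]

lemma integral_max_rank1 (h : IsExchangeableWithoutTies X P) {i j : Fin n} (hij : i ≠ j) :
    ∫ ω, max (rank1 X i ω) (rank1 X j ω) ∂P = 2 * ((n : ℝ) + 1) / 3 := by
  have hk : ∀ k, P.real {ω | X k ω ≤ max (X i ω) (X j ω)}
      = 2 / 3 + (if k = i then 1 / 3 else 0) + if k = j then 1 / 3 else 0 := by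
    intro k
    rcases eq_or_ne k i with rfl | hki
    · simp [hij]; norm_num
    rcases eq_or_ne k j with rfl | hkj
    · simp [hki]; norm_num
    rw [h.measureReal_le_max hij hki hkj, if_neg hki, if_neg hkj]; ring
  simp only [max_rank1]
  rw [integral_sum_ite_one _ fun k => measurableSet_le (h.measurable k)
    ((h.measurable i).max (h.measurable j))]
  simp only [hk, sum_add_distrib, sum_const, sum_ite_eq', mem_univ, if_true, card_univ,
    Fintype.card_fin, nsmul_eq_mul]
  ring

end IsExchangeableWithoutTies

end Rank

theorem stmt_3_general
    (n : ℕ)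
    (Ω : Type) [MeasurableSpace Ω]
    (P : Measure Ω) [IsProbabilityMeasure P]
    (X : Fin n → Ω → ℝ) (hX : IID1 X P) :
    ∀ i j : Fin n,
      ∫ ω, I1 X i j ω ∂ P =
        if i = j then 1 / 6 - 1 / (6 * (n : ℝ)) else -(1 / (6 * (n : ℝ))) := by
  intro i j
  have h := hX.isExchangeableWithoutTies
  have hn : (n : ℝ) ≠ 0 := Nat.cast_ne_zero.2 i.pos.ne'
  rw [integral_I1 h.measurable, h.integral_rank1, h.integral_rank1, h.integral_rank1_sq,
    h.integral_rank1_sq]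
  split_ifs with hij
  · subst hij
    simp only [max_self, h.integral_rank1]
    field_simp
    ring
  · rw [h.integral_max_rank1 hij]
    field_simp
    ring

/-- For all `i, j ∈ {1,…,n}`: `E[I_{i,j}] = 1/6 − 1/(6n)` if `i = j`,
and `E[I_{i,j}] = −1/(6n)` if `i ≠ j`. -/
theorem stmt_3
    (n : ℕ) (hn : 2 ≤ n)
    (Ω : Type) [MeasurableSpace Ω]
    (P : Measure Ω) [IsProbabilityMeasure P]
    (X : Fin n → Ω → ℝ) (hX : IID1 X P) :
    ∀ i j : Fin n,
      ∫ ω, I1 X i j ω ∂ P =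
        if i = j then 1 / 6 - 1 / (6 * (n : ℝ)) else -(1 / (6 * (n : ℝ))) :=
  stmt_3_general n Ω P X hX
end
end

section
/- Let d, k, ℓ ∈ ℕ with 2 ≤ k ≤ d/2 and 0 ≤ ℓ ≤ k−1. Let V_k(ℓ) be the set of pairs (p, q) ∈ P(d,k) × P(d,k) such that p_k < q_k and the sets {p_1,…,p_k} and {q_1,…,q_k} intersect in exactly ℓ elements. Then V_k(ℓ) is in bijection with P(d, 2k−ℓ) × P(2k−ℓ−1, k−1) × P(k−1, ℓ); in particular |V_k(ℓ)| = C(d, 2k−ℓ) · C(2k−ℓ−1, k−1) · C(k−1, ℓ), where C(a,b) denotes the binomial coefficient. -/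
open Finset

/-- `P(a,b)`: the strictly increasing `b`-tuples with entries in `{1,…,a}`. -/
def IncTup (a b : ℕ) : Type := {f : Fin b → Fin a // StrictMono f}

/-- The last entry `p_b` of a strictly increasing tuple (for `b > 0`). -/
def lastEntry {a b : ℕ} (hb : 0 < b) (f : IncTup a b) : Fin a :=
  f.1 ⟨b - 1, by omega⟩

/-- The set `V_k(ℓ)` of pairs `(p, q)` of strictly increasing `k`-tuples with `p_k < q_k`
whose entry sets intersect in exactly `ℓ` elements. -/
def Vset (d k ℓ : ℕ) (hk : 0 < k) : Set (IncTup d k × IncTup d k) :=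
  {pq | lastEntry hk pq.1 < lastEntry hk pq.2 ∧
    ((Finset.univ.image pq.1.1) ∩ (Finset.univ.image pq.2.1)).card = ℓ}

/-!
Identify strictly increasing tuples with their sets of entries. For `(P, Q)` in `V_k(ℓ)` the
maximum `u` of `U = P ∪ Q` lies in `Q \ P`, so `(P, Q) ↦ (U, Q.erase u, P ∩ Q)` is a bijection
onto the triples `(U, R, I)` with `#U = 2k - ℓ`, `R` a `(k-1)`-subset of `U.erase (max U)` and `I`
an `ℓ`-subset of `R`; the inverse is `(U, R, I) ↦ ((U \ Q) ∪ I, Q)` with `Q = insert (max U) R`.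
Counting the triples gives the formula, and finite types of equal cardinality are equivalent.
-/

namespace Finset

section DecidableEq

variable {α : Type*} [DecidableEq α]

lemma sdiff_union_union_of_subset {U Q I : Finset α} (hQU : Q ⊆ U) (hIQ : I ⊆ Q) :
    (U \ Q ∪ I) ∪ Q = U := by
  rw [union_assoc, union_eq_right.2 hIQ, sdiff_union_of_subset hQU]

lemma sdiff_union_inter_of_subset {U Q I : Finset α} (hIQ : I ⊆ Q) : (U \ Q ∪ I) ∩ Q = I := by
  rw [union_inter_distrib_right, sdiff_inter_self, empty_union, inter_eq_left.2 hIQ]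

end DecidableEq

section LinearOrder

variable {α : Type*} [LinearOrder α]

lemma max_lt_coe_iff {s : Finset α} {u : α} : s.max < u ↔ ∀ a ∈ s, a < u :=
  (Finset.sup_lt_iff (WithBot.bot_lt_coe u)).trans <| by simp only [WithBot.coe_lt_coe]

lemma mem_right_notMem_left_of_max_lt {P Q : Finset α} {u : α} (h : P.max < Q.max)
    (hu : (P ∪ Q).max = u) : u ∈ Q ∧ u ∉ P := by
  rw [max_union, sup_of_le_right h.le] at hu
  exact ⟨mem_of_max hu, notMem_of_max_lt_coe (hu ▸ h)⟩

lemma max_sdiff_insert_union_lt {U R I : Finset α} {u : α} (hu : U.max = u)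
    (hRU : R ⊆ U.erase u) (hIR : I ⊆ R) :
    (U \ insert u R ∪ I).max < (insert u R).max := by
  have hR : R.max ≤ u := hu ▸ max_mono (hRU.trans (erase_subset u U))
  rw [max_insert, max_eq_left hR, max_lt_coe_iff]
  intro a ha
  have haU : a ∈ U.erase u := by
    rcases mem_union.1 ha with ha | ha
    · exact mem_erase.2 ⟨fun h => (mem_sdiff.1 ha).2 (h ▸ mem_insert_self u R),
        (mem_sdiff.1 ha).1⟩
    · exact hRU (hIR ha)
  exact lt_of_le_of_ne (le_max_of_eq (mem_of_mem_erase haU) hu) (ne_of_mem_erase haU)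

end LinearOrder

end Finset

section OverlapPairs

variable {α : Type*} [LinearOrder α] [Fintype α]

/-- `V_k(ℓ)`, with each tuple replaced by its set of entries. -/
def overlapPairs (k ℓ : ℕ) : Finset (Finset α × Finset α) :=
  {x | #x.1 = k ∧ #x.2 = k ∧ x.1.max < x.2.max ∧ #(x.1 ∩ x.2) = ℓ}

lemma mem_overlapPairs {k ℓ : ℕ} {x : Finset α × Finset α} :
    x ∈ overlapPairs k ℓ ↔ #x.1 = k ∧ #x.2 = k ∧ x.1.max < x.2.max ∧ #(x.1 ∩ x.2) = ℓ := by
  simp [overlapPairs]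

lemma sdiff_insert_union_mem_overlapPairs {k ℓ : ℕ} {U R I : Finset α} {u : α}
    (hu : U.max = u) (hU : #U = 2 * k - ℓ) (hRU : R ⊆ U.erase u) (hR : #R = k - 1)
    (hIR : I ⊆ R) (hI : #I = ℓ) :
    (U \ insert u R ∪ I, insert u R) ∈ overlapPairs k ℓ ∧ U \ insert u R ∪ I ∪ insert u R = U := by
  have huU : u ∈ U := mem_of_max hu
  have huR : u ∉ R := fun h => (mem_erase.1 (hRU h)).1 rfl
  have hQU : insert u R ⊆ U := insert_subset huU (hRU.trans (erase_subset u U))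
  have hIQ : I ⊆ insert u R := hIR.trans (subset_insert u R)
  have hℓk : ℓ ≤ k - 1 := hI ▸ hR ▸ card_le_card hIR
  have hUpos : 0 < #U := card_pos.2 ⟨u, huU⟩
  refine ⟨mem_overlapPairs.2 ⟨?_, ?_, max_sdiff_insert_union_lt hu hRU hIR, ?_⟩,
    sdiff_union_union_of_subset hQU hIQ⟩
  · rw [card_union_of_disjoint (disjoint_sdiff_self_left.mono_right hIQ),
      card_sdiff_of_subset hQU, card_insert_of_notMem huR, hU, hR, hI]
    omega
  · rw [card_insert_of_notMem huR, hR]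
    omega
  · rw [sdiff_union_inter_of_subset hIQ, hI]

lemma card_filter_overlapPairs_union_eq {k ℓ : ℕ} {U : Finset α} {u : α} (hu : U.max = u)
    (hU : #U = 2 * k - ℓ) :
    #{x ∈ overlapPairs k ℓ | x.1 ∪ x.2 = U} =
      (2 * k - ℓ - 1).choose (k - 1) * (k - 1).choose ℓ := by
  have huU : u ∈ U := mem_of_max hu
  calc #{x ∈ overlapPairs k ℓ | x.1 ∪ x.2 = U}
      = #(((U.erase u).powersetCard (k - 1)).sigma fun R => R.powersetCard ℓ) := by
        refine card_nbij' (fun x => ⟨x.2.erase u, x.1 ∩ x.2⟩)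
          (fun y => (U \ insert u y.1 ∪ y.2, insert u y.1)) ?_ ?_ ?_ ?_
        · rintro ⟨P, Q⟩ hx
          simp only [coe_filter, mem_overlapPairs] at hx
          obtain ⟨⟨-, hQ, hlt, hI⟩, rfl⟩ := hx
          obtain ⟨huQ, huP⟩ := mem_right_notMem_left_of_max_lt hlt hu
          simp only [coe_sigma, Set.mem_sigma_iff, mem_coe, mem_powersetCard]
          refine ⟨⟨erase_subset_erase u subset_union_right, by rw [card_erase_of_mem huQ, hQ]⟩,
            fun a ha => mem_erase.2 ⟨?_, (mem_inter.1 ha).2⟩, hI⟩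
          rintro rfl
          exact huP (mem_inter.1 ha).1
        · rintro ⟨R, I⟩ hy
          simp only [coe_sigma, Set.mem_sigma_iff, mem_coe, mem_powersetCard] at hy
          obtain ⟨⟨hRU, hR⟩, hIR, hI⟩ := hy
          exact mem_filter.2 (sdiff_insert_union_mem_overlapPairs hu hU hRU hR hIR hI)
        · rintro ⟨P, Q⟩ hx
          simp only [coe_filter, mem_overlapPairs] at hx
          obtain ⟨⟨-, -, hlt, -⟩, rfl⟩ := hx
          obtain ⟨huQ, -⟩ := mem_right_notMem_left_of_max_lt hlt hu
          simp only [insert_erase huQ, union_sdiff_right, sdiff_union_inter]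
        · rintro ⟨R, I⟩ hy
          simp only [coe_sigma, Set.mem_sigma_iff, mem_coe, mem_powersetCard] at hy
          obtain ⟨⟨hRU, -⟩, hIR, -⟩ := hy
          have huR : u ∉ R := fun h => (mem_erase.1 (hRU h)).1 rfl
          simp only [erase_insert huR, sdiff_union_inter_of_subset (hIR.trans (subset_insert u R))]
    _ = (2 * k - ℓ - 1).choose (k - 1) * (k - 1).choose ℓ := by
        rw [card_sigma,
          sum_congr rfl fun R hR => by rw [card_powersetCard, (mem_powersetCard.1 hR).2],
          sum_const, card_powersetCard, card_erase_of_mem huU, hU, smul_eq_mul]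

theorem card_overlapPairs {k ℓ : ℕ} (hℓ : ℓ < k) :
    #(overlapPairs (α := α) k ℓ) =
      (Fintype.card α).choose (2 * k - ℓ) * (2 * k - ℓ - 1).choose (k - 1) * (k - 1).choose ℓ := by
  have hunion : Set.MapsTo (fun x : Finset α × Finset α => x.1 ∪ x.2)
      (overlapPairs (α := α) k ℓ : Set (Finset α × Finset α))
      (powersetCard (2 * k - ℓ) (univ : Finset α) : Set (Finset α)) := by
    intro x hx
    obtain ⟨hP, hQ, -, hI⟩ := mem_overlapPairs.1 hx
    have := card_union_add_card_inter x.1 x.2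
    exact mem_powersetCard.2 ⟨subset_univ _, show #(x.1 ∪ x.2) = _ by omega⟩
  rw [card_eq_sum_card_fiberwise hunion, sum_congr rfl fun U hU => ?_, sum_const,
    card_powersetCard, card_univ, smul_eq_mul, mul_assoc]
  have hU := (mem_powersetCard.1 hU).2
  obtain ⟨u, hu⟩ := max_of_nonempty (card_pos.1 (by omega) : U.Nonempty)
  exact card_filter_overlapPairs_union_eq hu hU

end OverlapPairs

namespace IncTup

variable {a b : ℕ}

def equivOrderEmbedding : IncTup a b ≃ (Fin b ↪o Fin a) where
  toFun f := OrderEmbedding.ofStrictMono f.1 f.2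
  invFun e := ⟨e, e.strictMono⟩
  left_inv _ := rfl
  right_inv _ := rfl

def equivPowersetCard : IncTup a b ≃ Set.powersetCard (Fin a) b :=
  equivOrderEmbedding.trans Set.powersetCard.ofFinEmbEquiv

lemma coe_equivPowersetCard (f : IncTup a b) :
    (equivPowersetCard f : Finset (Fin a)) = univ.image f.1 := by
  simp only [equivPowersetCard, Equiv.trans_apply, Set.powersetCard.ofFinEmbEquiv_apply,
    Set.powersetCard.val_ofFinEmb, map_eq_image]
  rfl

instance : Finite (IncTup a b) := .of_equiv _ equivPowersetCard.symm

lemma natCard_eq_choose : Nat.card (IncTup a b) = a.choose b := by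
  rw [Nat.card_congr equivPowersetCard, Set.powersetCard.card, Nat.card_fin]

lemma max_image_eq_lastEntry (hb : 0 < b) (f : IncTup a b) :
    (univ.image f.1).max = lastEntry hb f := by
  refine le_antisymm (Finset.max_le fun x hx => ?_) (le_max (mem_image_of_mem _ (mem_univ _)))
  obtain ⟨i, -, rfl⟩ := mem_image.1 hx
  exact WithBot.coe_le_coe.2 (f.2.monotone (Fin.le_def.2 (Nat.le_sub_one_of_lt i.2)))

end IncTup

lemma natCard_Vset (d k ℓ : ℕ) (hk : 0 < k) :
    Nat.card (Vset d k ℓ hk) = #(overlapPairs (α := Fin d) k ℓ) := by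
  let e : IncTup d k × IncTup d k ≃
      {x : Finset (Fin d) × Finset (Fin d) // x.1 ∈ Set.powersetCard (Fin d) k ∧
        x.2 ∈ Set.powersetCard (Fin d) k} :=
    (IncTup.equivPowersetCard.prodCongr IncTup.equivPowersetCard).trans
      Equiv.subtypeProdEquivProd.symm
  rw [← Nat.card_eq_finsetCard]
  refine Nat.card_congr <| (e.subtypeEquiv ?_).trans <|
    (Equiv.subtypeSubtypeEquivSubtypeInter _ fun x => x.1.max < x.2.max ∧ #(x.1 ∩ x.2) = ℓ).trans
      (Equiv.subtypeEquivRight fun _ => ?_)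
  · rintro ⟨p, q⟩
    change _ ↔ (IncTup.equivPowersetCard p).1.max < (IncTup.equivPowersetCard q).1.max ∧
      #((IncTup.equivPowersetCard p).1 ∩ (IncTup.equivPowersetCard q).1) = ℓ
    simp only [Vset, Set.mem_ofPred_eq, IncTup.coe_equivPowersetCard,
      IncTup.max_image_eq_lastEntry hk, WithBot.coe_lt_coe]
  · simp only [mem_overlapPairs, Set.powersetCard.mem_iff, and_assoc]

/-- For `2 ≤ k ≤ d/2` and `0 ≤ ℓ ≤ k−1`, the set `V_k(ℓ)` is in
bijection with `P(d, 2k−ℓ) × P(2k−ℓ−1, k−1) × P(k−1, ℓ)`; in particular its cardinality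
is `C(d, 2k−ℓ) · C(2k−ℓ−1, k−1) · C(k−1, ℓ)`. -/
theorem stmt_18 (d k ℓ : ℕ) (hk : 2 ≤ k) (hℓ : ℓ ≤ k - 1) :
    Nonempty (↥(Vset d k ℓ (by omega)) ≃
      IncTup d (2 * k - ℓ) × IncTup (2 * k - ℓ - 1) (k - 1) × IncTup (k - 1) ℓ) ∧
    Nat.card ↥(Vset d k ℓ (by omega)) =
      d.choose (2 * k - ℓ) * (2 * k - ℓ - 1).choose (k - 1) * (k - 1).choose ℓ := by
  have hcard : Nat.card ↥(Vset d k ℓ (by omega)) =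
      d.choose (2 * k - ℓ) * (2 * k - ℓ - 1).choose (k - 1) * (k - 1).choose ℓ := by
    rw [natCard_Vset, card_overlapPairs (by omega), Fintype.card_fin]
  refine ⟨Finite.card_eq.1 ?_, hcard⟩
  rw [hcard, Nat.card_prod, Nat.card_prod, IncTup.natCard_eq_choose, IncTup.natCard_eq_choose,
    IncTup.natCard_eq_choose, mul_assoc]
end
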